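/- Every separable real Banach space embeds isometrically into any Gurariĭ space: if G is a Gurariĭ space and X is a separable real Banach space, then there exists a linear isometry f : X → G. -/

import Mathlib

/-- A Gurariĭ space: a separable real Banach space `G` such that for all
finite-dimensional Banach spaces `X ⊆ Y`, every `ε > 0` and every linear isometry
`f : X → G`, there is an injective linear operator `g : Y → G` extending `f` with
`‖g‖ ⬝ ‖g⁻¹‖ < 1 + ε` (expressed via constants `M`, `N` bounding `g` above and below). -/
def IsGurarii (G : Type*) [NormedAddCommGroup G] [NormedSpace ℝ G] : Prop :=
  CompleteSpace G ∧ TopologicalSpace.SeparableSpace G ∧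
  ∀ (Y : Type) [NormedAddCommGroup Y] [NormedSpace ℝ Y] [FiniteDimensional ℝ Y]
    (X : Submodule ℝ Y) (ε : ℝ), 0 < ε →
    ∀ f : X →ₗ[ℝ] G, (∀ x : X, ‖f x‖ = ‖x‖) →
      ∃ g : Y →ₗ[ℝ] G, Function.Injective g ∧ (∀ x : X, g x = f x) ∧
        ∃ M N : ℝ, (∀ y : Y, ‖g y‖ ≤ M * ‖y‖) ∧ (∀ y : Y, ‖y‖ ≤ N * ‖g y‖) ∧
          M * N < 1 + ε

/-!
Write `X` as the closure of an increasing union of finite-dimensional subspaces `Xₙ` and build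
linear maps `ψₙ` that distort norms on `Xₙ` by at most `εₙ = 2⁻ⁿ⁻¹`, with `ψₙ₊₁` within `2⁻ⁿ`
of `ψₙ` on `Xₙ`. The pointwise limit is a linear isometry on `⋃ Xₙ`, which extends to `X` by
density.

The Gurariĭ property only extends exact isometries, so `ψₙ₊₁` comes from an amalgamation: on
`Xₙ₊₁ × Xₙ` the norm `‖(y, x)‖ = inf_u ‖y + u‖ + ‖ψₙ (x - u)‖ + εₙ ‖u‖` restricts to the norm of
`Xₙ₊₁` on `Xₙ₊₁ × 0`, makes `ψₙ` isometric on `0 × Xₙ`, and puts `(x, 0)` within `εₙ ‖x‖` of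
`(0, x)`. Extending `ψₙ` from `0 × Xₙ` by the Gurariĭ property and restricting to `Xₙ₊₁ × 0`
gives `ψₙ₊₁`.
-/

open Filter Topology

theorem abs_sub_le_mul_of_le_mul {a b M N δ : ℝ} (ha : 0 ≤ a) (hb : 0 ≤ b) (haM : a ≤ M * b)
    (hbN : b ≤ N * a) (hM : M ≤ 1 + δ) (hN : N ≤ 1 + δ) : |a - b| ≤ δ * b := by
  have ha' : a ≤ (1 + δ) * b := haM.trans (mul_le_mul_of_nonneg_right hM hb)
  have hb' : b ≤ (1 + δ) * a := hbN.trans (mul_le_mul_of_nonneg_right hN ha)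
  rw [abs_le]
  refine ⟨?_, by linarith⟩
  rcases le_total δ 1 with h | h
  · nlinarith [mul_le_mul_of_nonneg_left hb' (sub_nonneg.2 h), mul_nonneg ha (sq_nonneg δ)]
  · nlinarith

theorem IsGurarii.exists_extension {G : Type*} [NormedAddCommGroup G] [NormedSpace ℝ G]
    (hG : IsGurarii G) {Y : Type} [NormedAddCommGroup Y] [NormedSpace ℝ Y] [FiniteDimensional ℝ Y]
    (X : Submodule ℝ Y) (f : X →ₗ[ℝ] G) (hf : ∀ x, ‖f x‖ = ‖x‖) {δ : ℝ} (hδ : 0 < δ) :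
    ∃ g : Y →ₗ[ℝ] G, (∀ x : X, g x = f x) ∧ ∀ y, |‖g y‖ - ‖y‖| ≤ δ * ‖y‖ := by
  obtain ⟨g, -, hgf, M, N, hM, hN, hMN⟩ := hG.2.2 Y X δ hδ f hf
  by_cases hX : ∃ x : X, x ≠ 0
  · -- an isometric direction forces `1 ≤ M` and `1 ≤ N`, so both are at most `M * N`
    obtain ⟨x, hx⟩ := hX
    have hx₀ : 0 < ‖x‖ := norm_pos_iff.2 hx
    have hgx : ‖g x‖ = ‖x‖ := by rw [hgf, hf]
    have hM₁ : 1 ≤ M := (le_mul_iff_one_le_left hx₀).1 (by simpa [hgx] using hM x)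
    have hN₁ : 1 ≤ N := (le_mul_iff_one_le_left hx₀).1 (by simpa [hgx] using hN x)
    exact ⟨g, hgf, fun y => abs_sub_le_mul_of_le_mul (norm_nonneg _) (norm_nonneg _) (hM y)
      (hN y) (by nlinarith) (by nlinarith)⟩
  · -- nothing to extend: rescaling `g` by `N` gives the constants `M * N` and `1`
    push Not at hX
    refine ⟨N • g, fun x => by simp [hX x], fun y => ?_⟩
    rcases eq_or_ne y 0 with rfl | hy
    · simp
    have hN₀ : 0 < N := by
      by_contra! h
      nlinarith [norm_pos_iff.2 hy, hN y, mul_nonpos_of_nonpos_of_nonneg h (norm_nonneg (g y))]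
    have hNg : ‖(N • g) y‖ = N * ‖g y‖ := by
      rw [LinearMap.smul_apply, norm_smul, Real.norm_of_nonneg hN₀.le]
    refine abs_sub_le_mul_of_le_mul (norm_nonneg _) (norm_nonneg _) (M := M * N) (N := 1)
      ?_ ?_ hMN.le (by linarith)
    · rw [hNg]; nlinarith [hM y]
    · rw [hNg, one_mul]; exact hN y

section Amalgamation

variable {E F G : Type*} [NormedAddCommGroup E] [NormedSpace ℝ E] [NormedAddCommGroup F]
  [NormedSpace ℝ F] [NormedAddCommGroup G] [NormedSpace ℝ G]
  (ι : E →ₗᵢ[ℝ] F) (f : E →ₗ[ℝ] G) (ε : ℝ)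

noncomputable def amalgNorm (p : F × E) : ℝ :=
  ⨅ u : E, ‖p.1 + ι u‖ + ‖f (p.2 - u)‖ + ε * ‖u‖

/-- `F × E`, to be normed by `amalgNorm ι f ε` instead of the sup norm. -/
def Amalgam (_ : E →ₗᵢ[ℝ] F) (_ : E →ₗ[ℝ] G) (_ : ℝ) : Type _ := F × E

instance : AddCommGroup (Amalgam ι f ε) := inferInstanceAs (AddCommGroup (F × E))

instance : Module ℝ (Amalgam ι f ε) := inferInstanceAs (Module ℝ (F × E))

noncomputable instance : Norm (Amalgam ι f ε) := ⟨amalgNorm ι f ε⟩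

instance [FiniteDimensional ℝ E] [FiniteDimensional ℝ F] : FiniteDimensional ℝ (Amalgam ι f ε) :=
  inferInstanceAs (FiniteDimensional ℝ (F × E))

variable {ι f ε}

theorem amalgNorm_le (hε : 0 ≤ ε) (p : F × E) (u : E) :
    amalgNorm ι f ε p ≤ ‖p.1 + ι u‖ + ‖f (p.2 - u)‖ + ε * ‖u‖ :=
  ciInf_le ⟨0, by rintro _ ⟨v, rfl⟩; positivity⟩ u

theorem amalgNorm_zero (hε : 0 ≤ ε) : amalgNorm ι f ε 0 = 0 :=
  le_antisymm (by simpa using amalgNorm_le (ι := ι) (f := f) hε 0 0)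
    (le_ciInf fun _ => by positivity)

theorem amalgNorm_add_le (hε : 0 ≤ ε) (p q : F × E) :
    amalgNorm ι f ε (p + q) ≤ amalgNorm ι f ε p + amalgNorm ι f ε q := by
  rw [← sub_le_iff_le_add]
  refine le_ciInf fun u => ?_
  rw [sub_le_iff_le_add', ← sub_le_iff_le_add]
  refine le_ciInf fun v => ?_
  rw [sub_le_iff_le_add]
  refine (amalgNorm_le hε _ (u + v)).trans ?_
  have e₁ : (p + q).1 + ι (u + v) = (p.1 + ι u) + (q.1 + ι v) := by
    simp only [Prod.fst_add, map_add]; abel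
  have e₂ : (p + q).2 - (u + v) = (p.2 - u) + (q.2 - v) := by
    simp only [Prod.snd_add]; abel
  rw [e₁, e₂, map_add]
  nlinarith [norm_add_le (p.1 + ι u) (q.1 + ι v), norm_add_le (f (p.2 - u)) (f (q.2 - v)),
    mul_le_mul_of_nonneg_left (norm_add_le u v) hε]

theorem amalgNorm_smul_le (hε : 0 ≤ ε) (c : ℝ) (p : F × E) :
    amalgNorm ι f ε (c • p) ≤ ‖c‖ * amalgNorm ι f ε p := by
  conv_rhs => rw [amalgNorm, Real.mul_iInf_of_nonneg (norm_nonneg c)]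
  refine le_ciInf fun u => (amalgNorm_le hε _ (c • u)).trans_eq ?_
  simp only [Prod.smul_fst, Prod.smul_snd, map_smul, ← smul_add, ← smul_sub, norm_smul]
  ring

theorem mul_norm_le_amalgNorm (hε : 0 ≤ ε) (hε' : ε ≤ 1 / 2)
    (hf : ∀ x, (1 - ε) * ‖x‖ ≤ ‖f x‖) (p : F × E) : ε * ‖p‖ ≤ amalgNorm ι f ε p := by
  refine le_ciInf fun u => ?_
  rw [Prod.norm_def, mul_max_of_nonneg _ _ hε, max_le_iff]
  have h₁ := norm_le_add_norm_add p.1 (ι u)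
  have h₂ := norm_le_norm_add_norm_sub' p.2 u
  have h₃ := hf (p.2 - u)
  rw [ι.norm_map] at h₁
  constructor <;> nlinarith [norm_nonneg (p.1 + ι u), norm_nonneg (p.2 - u), norm_nonneg u]

theorem Amalgam.normedSpaceCore (hε : 0 < ε) (hε' : ε ≤ 1 / 2)
    (hf : ∀ x, (1 - ε) * ‖x‖ ≤ ‖f x‖) : NormedSpace.Core ℝ (Amalgam ι f ε) :=
  let s : Seminorm ℝ (F × E) := Seminorm.ofSMulLE (amalgNorm ι f ε) (amalgNorm_zero hε.le)
    (amalgNorm_add_le hε.le) (amalgNorm_smul_le hε.le)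
  { norm_nonneg := apply_nonneg s
    norm_smul := map_smul_eq_mul s
    norm_triangle := amalgNorm_add_le hε.le
    norm_eq_zero_iff := fun p => by
      refine ⟨fun hp => ?_, fun hp => hp ▸ amalgNorm_zero hε.le⟩
      have h := mul_norm_le_amalgNorm (ι := ι) hε.le hε' hf p
      rw [show amalgNorm ι f ε p = 0 from hp] at h
      exact (@norm_eq_zero (F × E) _ p).1
        (le_antisymm (nonpos_of_mul_nonpos_right h hε) (norm_nonneg _)) }

theorem amalgNorm_inl (hε : 0 ≤ ε) (hf : ∀ x, (1 - ε) * ‖x‖ ≤ ‖f x‖) (y : F) :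
    amalgNorm ι f ε (y, 0) = ‖y‖ := by
  refine le_antisymm (by simpa using amalgNorm_le (f := f) hε (y, 0) 0) (le_ciInf fun u => ?_)
  simp only [zero_sub, map_neg, norm_neg]
  nlinarith [norm_le_add_norm_add y (ι u), ι.norm_map u, hf u]

theorem amalgNorm_inr (hε : 0 ≤ ε) (hf : ∀ x, ‖f x‖ ≤ (1 + ε) * ‖x‖) (x : E) :
    amalgNorm ι f ε (0, x) = ‖f x‖ := by
  refine le_antisymm (by simpa using amalgNorm_le (ι := ι) hε (0, x) 0) (le_ciInf fun u => ?_)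
  simp only [zero_add, map_sub]
  nlinarith [norm_sub_norm_le (f x) (f u), ι.norm_map u, hf u]

theorem amalgNorm_inl_sub_inr_le (hε : 0 ≤ ε) (x : E) : amalgNorm ι f ε (ι x, -x) ≤ ε * ‖x‖ := by
  simpa using amalgNorm_le (ι := ι) (f := f) hε (ι x, -x) (-x)

end Amalgamation

theorem IsGurarii.exists_approx_extension {G : Type*} [NormedAddCommGroup G] [NormedSpace ℝ G]
    (hG : IsGurarii G) {E F : Type} [NormedAddCommGroup E] [NormedSpace ℝ E]
    [NormedAddCommGroup F] [NormedSpace ℝ F] [FiniteDimensional ℝ F] (ι : E →ₗᵢ[ℝ] F)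
    {f : E →ₗ[ℝ] G} {ε δ : ℝ} (hε : 0 < ε) (hε' : ε ≤ 1 / 2) (hδ : 0 < δ)
    (hf : ∀ x, |‖f x‖ - ‖x‖| ≤ ε * ‖x‖) :
    ∃ h : F →ₗ[ℝ] G, (∀ y, |‖h y‖ - ‖y‖| ≤ δ * ‖y‖) ∧ ∀ x, ‖h (ι x) - f x‖ ≤ (1 + δ) * ε * ‖x‖ := by
  have hf_ge : ∀ x, (1 - ε) * ‖x‖ ≤ ‖f x‖ := fun x => by linarith [(abs_le.1 (hf x)).1]
  have hf_le : ∀ x, ‖f x‖ ≤ (1 + ε) * ‖x‖ := fun x => by linarith [(abs_le.1 (hf x)).2]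
  have : FiniteDimensional ℝ E := Module.Finite.of_injective ι.toLinearMap ι.injective
  let := NormedAddCommGroup.ofCore (Amalgam.normedSpaceCore (ι := ι) hε hε' hf_ge)
  let := NormedSpace.ofCore (Amalgam.normedSpaceCore (ι := ι) hε hε' hf_ge)
  let j : F →ₗ[ℝ] Amalgam ι f ε := LinearMap.inl ℝ F E
  let k : E →ₗ[ℝ] Amalgam ι f ε := LinearMap.inr ℝ F E
  have hj : ∀ y, ‖j y‖ = ‖y‖ := amalgNorm_inl hε.le hf_ge
  have hk : ∀ x, ‖k x‖ = ‖f x‖ := amalgNorm_inr hε.le hf_le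
  -- `snd` inverts `k` on its range, so `f'` is `f` moved to `range k`, where it is isometric
  let f' : LinearMap.range k →ₗ[ℝ] G :=
    f ∘ₗ (LinearMap.snd ℝ F E : Amalgam ι f ε →ₗ[ℝ] E) ∘ₗ (LinearMap.range k).subtype
  have hf' : ∀ w, ‖f' w‖ = ‖w‖ := by
    rintro ⟨_, x, rfl⟩
    exact (hk x).symm
  obtain ⟨g, hgf, hg⟩ := hG.exists_extension _ f' hf' hδ
  refine ⟨g ∘ₗ j, fun y => by simpa [hj] using hg (j y), fun x => ?_⟩
  have hgk : g (k x) = f x := hgf ⟨k x, x, rfl⟩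
  have hjk : ‖j (ι x) - k x‖ ≤ ε * ‖x‖ := by
    have e : j (ι x) - k x = (show Amalgam ι f ε from (ι x, -x)) :=
      Prod.ext (sub_zero (ι x)) (zero_sub x)
    rw [e]
    exact amalgNorm_inl_sub_inr_le hε.le x
  calc ‖g (j (ι x)) - f x‖ = ‖g (j (ι x) - k x)‖ := by rw [map_sub, hgk]
    _ ≤ (1 + δ) * ‖j (ι x) - k x‖ := by linarith [(abs_le.1 (hg (j (ι x) - k x))).2]
    _ ≤ (1 + δ) * (ε * ‖x‖) := by gcongr
    _ = (1 + δ) * ε * ‖x‖ := by ring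

theorem IsGurarii.exists_approx_extension_of_le {G : Type*} [NormedAddCommGroup G]
    [NormedSpace ℝ G] (hG : IsGurarii G) {X : Type} [NormedAddCommGroup X] [NormedSpace ℝ X]
    {E F : Submodule ℝ X} (hEF : E ≤ F) [FiniteDimensional ℝ F] {ψ : X →ₗ[ℝ] G} {ε δ : ℝ}
    (hε : 0 < ε) (hε' : ε ≤ 1 / 2) (hδ : 0 < δ) (hψ : ∀ x ∈ E, |‖ψ x‖ - ‖x‖| ≤ ε * ‖x‖) :
    ∃ ψ' : X →ₗ[ℝ] G, (∀ x ∈ F, |‖ψ' x‖ - ‖x‖| ≤ δ * ‖x‖) ∧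
      ∀ x ∈ E, ‖ψ' x - ψ x‖ ≤ (1 + δ) * ε * ‖x‖ := by
  let ι : E →ₗᵢ[ℝ] F := ⟨Submodule.inclusion hEF, fun _ => rfl⟩
  obtain ⟨h, hh, hclose⟩ :=
    hG.exists_approx_extension ι (f := ψ ∘ₗ E.subtype) hε hε' hδ fun x => hψ x x.2
  obtain ⟨ψ', hψ'⟩ := LinearMap.exists_extend h
  have happ : ∀ y : F, ψ' y = h y := LinearMap.congr_fun hψ'
  refine ⟨ψ', fun x hx => ?_, fun x hx => ?_⟩
  · rw [happ ⟨x, hx⟩]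
    exact hh ⟨x, hx⟩
  · have := hclose ⟨x, hx⟩
    rw [← happ] at this
    exact this

theorem exists_seq_of_exists_succ {α : Type*} (P : ℕ → α → Prop) (R : ℕ → α → α → Prop) {a : α}
    (ha : P 0 a) (step : ∀ n a, P n a → ∃ b, P (n + 1) b ∧ R n a b) :
    ∃ s : ℕ → α, ∀ n, P n (s n) ∧ R n (s n) (s (n + 1)) := by
  choose! next hnext using step
  let s : ℕ → α := fun n => Nat.rec a next n
  have hs : ∀ n, P n (s n) := fun n => by
    induction n with
    | zero => exact ha
    | succ n ih => exact (hnext n _ ih).1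
  exact ⟨s, fun n => ⟨hs n, (hnext n _ (hs n)).2⟩⟩

theorem IsGurarii.exists_seq_approx {G : Type*} [NormedAddCommGroup G] [NormedSpace ℝ G]
    (hG : IsGurarii G) {X : Type} [NormedAddCommGroup X] [NormedSpace ℝ X]
    {Xs : ℕ → Submodule ℝ X} (hXs : Monotone Xs) [∀ n, FiniteDimensional ℝ (Xs n)]
    (h₀ : Xs 0 = ⊥) :
    ∃ ψ : ℕ → X →ₗ[ℝ] G, ∀ n, (∀ x ∈ Xs n, |‖ψ n x‖ - ‖x‖| ≤ (1 / 2) ^ (n + 1) * ‖x‖) ∧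
      ∀ x ∈ Xs n, ‖ψ (n + 1) x - ψ n x‖ ≤ (1 / 2) ^ n * ‖x‖ := by
  refine exists_seq_of_exists_succ
    (fun n (ψ : X →ₗ[ℝ] G) => ∀ x ∈ Xs n, |‖ψ x‖ - ‖x‖| ≤ (1 / 2) ^ (n + 1) * ‖x‖)
    (fun n ψ ψ' => ∀ x ∈ Xs n, ‖ψ' x - ψ x‖ ≤ (1 / 2) ^ n * ‖x‖) (a := 0) ?_ fun n ψ hψ => ?_
  · intro x hx
    rw [h₀, Submodule.mem_bot] at hx
    simp [hx]
  obtain ⟨ψ', hψ', hclose⟩ := hG.exists_approx_extension_of_le (hXs n.le_succ)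
    (ε := (1 / 2) ^ (n + 1)) (δ := (1 / 2) ^ (n + 2)) (by positivity)
    (pow_le_of_le_one (by norm_num) (by norm_num) n.succ_ne_zero) (by positivity) hψ
  refine ⟨ψ', hψ', fun x hx => (hclose x hx).trans (mul_le_mul_of_nonneg_right ?_ (norm_nonneg x))⟩
  calc (1 + (1 / 2 : ℝ) ^ (n + 2)) * (1 / 2) ^ (n + 1) ≤ (1 + 1) * (1 / 2) ^ (n + 1) := by
        gcongr; exact pow_le_one₀ (by norm_num) (by norm_num)
    _ = (1 / 2) ^ n := by ring

theorem exists_norm_eq_of_tendsto {𝕜 E G : Type*} [NormedField 𝕜] [SeminormedAddCommGroup E]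
    [Module 𝕜 E] [NormedAddCommGroup G] [NormedSpace 𝕜 G] {ψ : ℕ → E →ₗ[𝕜] G}
    (hconv : ∀ v, ∃ l, Tendsto (fun n => ψ n v) atTop (𝓝 l))
    (hnorm : ∀ v, Tendsto (fun n => ‖ψ n v‖) atTop (𝓝 ‖v‖)) :
    ∃ F : E →ₗ[𝕜] G, ∀ v, ‖F v‖ = ‖v‖ := by
  choose F hF using hconv
  exact ⟨linearMapOfTendsto F ψ (tendsto_pi_nhds.2 hF),
    fun v => tendsto_nhds_unique (hF v).norm (hnorm v)⟩

theorem exists_norm_eq_of_dense {𝕜 X G : Type*} [NontriviallyNormedField 𝕜]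
    [NormedAddCommGroup X] [NormedSpace 𝕜 X] [NormedAddCommGroup G] [NormedSpace 𝕜 G]
    [CompleteSpace G] {V : Submodule 𝕜 X} (hV : Dense (V : Set X)) (F : V →ₗ[𝕜] G)
    (hF : ∀ v, ‖F v‖ = ‖v‖) : ∃ f : X →ₗ[𝕜] G, ∀ x, ‖f x‖ = ‖x‖ := by
  have hd : DenseRange V.subtype := by simpa [DenseRange] using hV
  have hb : ∃ C, ∀ v, ‖F v‖ ≤ C * ‖V.subtype v‖ := ⟨1, fun v => by simp [hF]⟩
  refine ⟨(F.extendOfNorm V.subtype).toLinearMap, fun x => hd.induction ?_ ?_ x⟩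
  · rintro _ ⟨v, rfl⟩
    rw [ContinuousLinearMap.coe_coe, LinearMap.extendOfNorm_eq hd hb, hF]
    rfl
  · exact isClosed_eq (by fun_prop) continuous_norm

theorem exists_norm_eq_of_approx {X G : Type*} [NormedAddCommGroup X] [NormedSpace ℝ X]
    [NormedAddCommGroup G] [NormedSpace ℝ G] [CompleteSpace G] {Xs : ℕ → Submodule ℝ X}
    (hXs : Monotone Xs) (hdense : Dense ((⨆ n, Xs n : Submodule ℝ X) : Set X))
    {ψ : ℕ → X →ₗ[ℝ] G} {ε c : ℕ → ℝ} (hε : Tendsto ε atTop (𝓝 0)) (hc : Summable c)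
    (hnear : ∀ n, ∀ x ∈ Xs n, |‖ψ n x‖ - ‖x‖| ≤ ε n * ‖x‖)
    (hclose : ∀ n, ∀ x ∈ Xs n, ‖ψ (n + 1) x - ψ n x‖ ≤ c n * ‖x‖) :
    ∃ f : X →ₗ[ℝ] G, ∀ x, ‖f x‖ = ‖x‖ := by
  let V := ⨆ n, Xs n
  have hmem (v : V) : ∀ᶠ n in atTop, (v : X) ∈ Xs n := by
    obtain ⟨n₀, hn₀⟩ := (Submodule.mem_iSup_of_directed Xs hXs.directed_le).1 v.2
    exact eventually_atTop.2 ⟨n₀, fun n hn => hXs hn hn₀⟩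
  have hconv (v : V) : ∃ l, Tendsto (fun n => ψ n v) atTop (𝓝 l) := by
    refine cauchySeq_tendsto_of_complete (cauchySeq_of_summable_dist ?_)
    refine (hc.mul_right ‖v‖).of_norm_bounded_eventually_nat ?_
    filter_upwards [hmem v] with n hn
    rw [Real.norm_of_nonneg dist_nonneg, dist_comm, dist_eq_norm]
    exact hclose n v hn
  have hnorm (v : V) : Tendsto (fun n => ‖ψ n v‖) atTop (𝓝 ‖v‖) := by
    refine tendsto_sub_nhds_zero_iff.1 (squeeze_zero_norm' ?_ (by simpa using hε.mul_const ‖v‖))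
    filter_upwards [hmem v] with n hn
    simpa using hnear n v hn
  obtain ⟨F, hF⟩ := exists_norm_eq_of_tendsto (ψ := fun n => ψ n ∘ₗ V.subtype) hconv hnorm
  exact exists_norm_eq_of_dense hdense F hF

theorem gurarii_isometrically_universal_general
    {G : Type} [NormedAddCommGroup G] [NormedSpace ℝ G] (hG : IsGurarii G)
    {X : Type} [NormedAddCommGroup X] [NormedSpace ℝ X]
    [TopologicalSpace.SeparableSpace X] :
    ∃ f : X →ₗ[ℝ] G, ∀ x : X, ‖f x‖ = ‖x‖ := by
  have : CompleteSpace G := hG.1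
  obtain ⟨D, hD⟩ := TopologicalSpace.exists_dense_seq X
  let Xs (n : ℕ) : Submodule ℝ X := Submodule.span ℝ (D '' Set.Iio n)
  have hXs : Monotone Xs := fun m n h => Submodule.span_mono (Set.image_mono (Set.Iio_subset_Iio h))
  have (n : ℕ) : FiniteDimensional ℝ (Xs n) :=
    FiniteDimensional.span_of_finite ℝ ((Set.finite_Iio n).image D)
  have hdense : Dense ((⨆ n, Xs n : Submodule ℝ X) : Set X) :=
    hD.mono <| Set.range_subset_iff.2 fun i =>
      Submodule.mem_iSup_of_mem (i + 1) (Submodule.subset_span ⟨i, Nat.lt_succ_self i, rfl⟩)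
  obtain ⟨ψ, hψ⟩ := hG.exists_seq_approx hXs (by simp [Xs])
  exact exists_norm_eq_of_approx hXs hdense
    ((tendsto_pow_atTop_nhds_zero_of_lt_one (by norm_num) (by norm_num)).comp
      (tendsto_add_atTop_nat 1)) summable_geometric_two (fun n => (hψ n).1) fun n => (hψ n).2

/-- Every separable real Banach space embeds isometrically into any Gurariĭ space. -/
theorem gurarii_isometrically_universal
    {G : Type} [NormedAddCommGroup G] [NormedSpace ℝ G] (hG : IsGurarii G)
    {X : Type} [NormedAddCommGroup X] [NormedSpace ℝ X] [CompleteSpace X]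
    [TopologicalSpace.SeparableSpace X] :
    ∃ f : X →ₗ[ℝ] G, ∀ x : X, ‖f x‖ = ‖x‖ :=
  gurarii_isometrically_universal_general hG
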